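/- Let n ≥ 3 be odd and q ∈ k a primitive n-th root of unity. Let A = k[u]/(u^n − 1) carry the u_q(sl₂)-module-algebra structure (κ, e, f) with κ(u) = q²·u, f(u) = γ·1_A, e(u) = δ·u², where γ, δ ∈ k are nonzero with γδ = −q. Then each of the following two prescriptions extends to a D(u_q(sl₂))-module-algebra structure (T_a, T_b, T_c, T_d) on A: (i) T_a(u) = q·u, T_b(u) = γ(q − q^{-1})·1_A, T_c(u) = 0, T_d(u) = q^{-1}·u; and (ii) T_a(u) = q^{-1}·u, T_b(u) = 0, T_c(u) = γ^{-1}(q − q^{-1})·u², T_d(u) = q·u. -/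

import Mathlib

/-!
Write `n = 2m + 1`. Then `σ = κ^(m+1)` is a square root of `κ`, it satisfies `σ e = q e σ`,
`σ f = q⁻¹ f σ`, and `σ u = q u`. Prescription (i) is realised by
`T_a = σ, T_b = (1 - q⁻²) f σ, T_c = 0, T_d = σ⁻¹` and (ii) by
`T_a = σ⁻¹, T_b = 0, T_c = (q⁻¹ - q) e σ⁻¹, T_d = σ`; the coefficients are forced by the
relations `f T_a = q⁻¹ T_a f + T_b` and `e T_a = q⁻¹ T_a e - q⁻¹ T_c`. The product rules are the
twisted Leibniz rules of `f` and `e` conjugated by `σ`, and `T_b`, `T_c` are nilpotent because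
`f`, `e` are and `σ` only rescales them. Every operator relation becomes an identity of scalars
once words in `e, f, σ, σ⁻¹` are rewritten to the normal form `f^a e^b σ^c`.
-/

/-- The data of an extension of a `u_q(sl₂)`-module-algebra structure `(κ, e, f)` on `A`
to a `D(u_q(sl₂))`-module-algebra structure, given by the actions `Ta, Tb, Tc, Td` of the
dual generators `a, b, c, d` of the Drinfel'd double. -/
def IsDUqExtension {k A : Type*} [Field k] [CommRing A] [Algebra k A]
    (n : ℕ) (q : k) (κ : A ≃ₐ[k] A) (e f : A →ₗ[k] A)
    (Ta Tb Tc Td : A →ₗ[k] A) : Prop :=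
  Ta 1 = 1 ∧ Td 1 = 1 ∧ Tb 1 = 0 ∧ Tc 1 = 0 ∧
  (∀ v w : A, Ta (v * w) = Ta v * Ta w + Tc v * Tb w) ∧
  (∀ v w : A, Tb (v * w) = Tb v * Ta w + Td v * Tb w) ∧
  (∀ v w : A, Tc (v * w) = Ta v * Tc w + Tc v * Td w) ∧
  (∀ v w : A, Td (v * w) = Tb v * Tc w + Td v * Td w) ∧
  Ta ^ n = 1 ∧ Td ^ n = 1 ∧ Tb ^ n = 0 ∧ Tc ^ n = 0 ∧
  Tb ∘ₗ Ta = q • (Ta ∘ₗ Tb) ∧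
  Td ∘ₗ Tb = q • (Tb ∘ₗ Td) ∧
  Tc ∘ₗ Ta = q • (Ta ∘ₗ Tc) ∧
  Td ∘ₗ Tc = q • (Tc ∘ₗ Td) ∧
  Tb ∘ₗ Tc = Tc ∘ₗ Tb ∧
  Ta ∘ₗ Td = q⁻¹ • (Tb ∘ₗ Tc) + LinearMap.id ∧
  κ.toLinearMap ∘ₗ Ta = Ta ∘ₗ κ.toLinearMap ∧
  κ.toLinearMap ∘ₗ Tb = (q⁻¹) ^ 2 • (Tb ∘ₗ κ.toLinearMap) ∧
  κ.toLinearMap ∘ₗ Tc = q ^ 2 • (Tc ∘ₗ κ.toLinearMap) ∧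
  κ.toLinearMap ∘ₗ Td = Td ∘ₗ κ.toLinearMap ∧
  e ∘ₗ Ta = q⁻¹ • (Ta ∘ₗ e) - q⁻¹ • Tc ∧
  e ∘ₗ Tb = q⁻¹ • (Tb ∘ₗ e) + q⁻¹ • (Ta ∘ₗ κ.toLinearMap) - q⁻¹ • Td ∧
  e ∘ₗ Tc = q • (Tc ∘ₗ e) ∧
  e ∘ₗ Td = q • (Td ∘ₗ e) + q • (Tc ∘ₗ κ.toLinearMap) ∧
  f ∘ₗ Ta = q⁻¹ • (Ta ∘ₗ f) + Tb ∧
  f ∘ₗ Tb = q • (Tb ∘ₗ f) ∧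
  f ∘ₗ Tc = q⁻¹ • (Tc ∘ₗ f) - Ta ∘ₗ (κ⁻¹ : A ≃ₐ[k] A).toLinearMap + Td ∧
  f ∘ₗ Td = q • (Td ∘ₗ f) - q ^ 2 • (Tb ∘ₗ (κ⁻¹ : A ≃ₐ[k] A).toLinearMap)


section Twist

variable {k R : Type*} [CommSemiring k] [Semiring R] [Algebra k R] {g h : R} {r : k}

theorem mul_mul_eq_smul_of_twist (hgh : g * h = r • (h * g)) (x : R) :
    g * (h * x) = r • (h * (g * x)) := by
  rw [← mul_assoc, hgh, smul_mul_assoc, mul_assoc]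

theorem pow_mul_eq_smul_of_twist (hgh : g * h = r • (h * g)) (j : ℕ) :
    g ^ j * h = r ^ j • (h * g ^ j) := by
  induction j with
  | zero => simp
  | succ j ih =>
    rw [pow_succ, mul_assoc, hgh, mul_smul_comm, ← mul_assoc, ih, smul_mul_assoc, smul_smul,
      mul_assoc, ← pow_succ, ← pow_succ']

theorem mul_pow_eq_smul_of_twist (hgh : g * h = r • (h * g)) (j : ℕ) :
    (h * g) ^ j = r ^ j.choose 2 • (h ^ j * g ^ j) := by
  induction j with
  | zero => simp
  | succ j ih =>
    have hchoose : (j + 1).choose 2 = j.choose 2 + j := by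
      rw [Nat.choose_succ_succ', Nat.choose_one_right, add_comm]
    rw [pow_succ, ih, smul_mul_assoc, mul_assoc, ← mul_assoc (g ^ j),
      pow_mul_eq_smul_of_twist hgh, smul_mul_assoc, mul_smul_comm, smul_smul, ← pow_add,
      mul_assoc, ← pow_succ, ← mul_assoc, ← pow_succ, hchoose]

theorem mul_pow_eq_zero_of_twist (hgh : g * h = r • (h * g)) {n : ℕ} (hh : h ^ n = 0) :
    (h * g) ^ n = 0 := by
  rw [mul_pow_eq_smul_of_twist hgh, hh, zero_mul, smul_zero]

end Twist

section Field

variable {k : Type*} [Field k]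

theorem inv_mul_eq_smul_of_twist {R : Type*} [Semiring R] [Algebra k R] {g g' h : R} {r : k}
    (hr : r ≠ 0) (hgg' : g * g' = 1) (hg'g : g' * g = 1) (hgh : g * h = r • (h * g)) :
    g' * h = r⁻¹ • (h * g') := by
  have hhg : h * g = r⁻¹ • (g * h) := by rw [hgh, smul_smul, inv_mul_cancel₀ hr, one_smul]
  calc g' * h = g' * (h * g) * g' := by rw [← mul_assoc, mul_assoc _ g, hgg', mul_one]
    _ = r⁻¹ • (h * g') := by
      rw [hhg, mul_smul_comm, smul_mul_assoc, ← mul_assoc, hg'g, one_mul]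

theorem mul_mul_eq_add_smul_of_smul_commutator {R : Type*} [Ring R] [Algebra k R] {p : k}
    {e f g : R} (hp : p ≠ 0) (hef : p • (e * f - f * e) = g) (x : R) :
    e * (f * x) = f * (e * x) + p⁻¹ • (g * x) := by
  rw [← hef, smul_mul_assoc, inv_smul_smul₀ hp, sub_mul, mul_assoc, mul_assoc, add_sub_cancel]

theorem sub_inv_ne_zero_of_sq_ne_one {q : k} (hq0 : q ≠ 0) (hq2 : q ^ 2 ≠ 1) : q - q⁻¹ ≠ 0 := by
  intro h
  apply hq2
  rw [sq]
  nth_rw 2 [sub_eq_zero.mp h]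
  exact mul_inv_cancel₀ hq0

end Field

theorem pow_succ_mul_pow_succ_of_pow_eq_one {M : Type*} [Monoid M] {x : M} {m : ℕ}
    (h : x ^ (2 * m + 1) = 1) : x ^ (m + 1) * x ^ (m + 1) = x := by
  rw [← pow_add, show m + 1 + (m + 1) = 2 * m + 1 + 1 by omega, pow_succ, h, one_mul]

theorem sq_pow_succ_of_pow_eq_one {M : Type*} [CommMonoid M] {x : M} {m : ℕ}
    (h : x ^ (2 * m + 1) = 1) : (x ^ 2) ^ (m + 1) = x := by
  rw [← pow_mul, mul_comm, pow_mul, sq, pow_succ_mul_pow_succ_of_pow_eq_one h]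

namespace AlgEquiv

section Semiring

variable {k A : Type*} [CommSemiring k] [Semiring A] [Algebra k A] (σ : A ≃ₐ[k] A)

theorem toLinearMap_mul (τ : A ≃ₐ[k] A) :
    (σ * τ).toLinearMap = σ.toLinearMap * τ.toLinearMap :=
  rfl

theorem toLinearMap_mul_toLinearMap_inv : σ.toLinearMap * σ⁻¹.toLinearMap = 1 := by
  rw [← toLinearMap_mul, mul_inv_cancel, one_toLinearMap]

theorem toLinearMap_inv_mul_toLinearMap : σ⁻¹.toLinearMap * σ.toLinearMap = 1 := by
  rw [← toLinearMap_mul, inv_mul_cancel, one_toLinearMap]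

theorem toLinearMap_mul_inv_cancel_left (x : Module.End k A) :
    σ.toLinearMap * (σ⁻¹.toLinearMap * x) = x := by
  rw [← mul_assoc, toLinearMap_mul_toLinearMap_inv, one_mul]

theorem toLinearMap_inv_mul_cancel_left (x : Module.End k A) :
    σ⁻¹.toLinearMap * (σ.toLinearMap * x) = x := by
  rw [← mul_assoc, toLinearMap_inv_mul_toLinearMap, one_mul]

end Semiring

variable {k A : Type*} [Field k] [Semiring A] [Algebra k A] {σ : A ≃ₐ[k] A} {r : k}

theorem toLinearMap_inv_mul_eq_smul {g : Module.End k A} (hr : r ≠ 0)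
    (hσg : σ.toLinearMap * g = r • (g * σ.toLinearMap)) :
    σ⁻¹.toLinearMap * g = r⁻¹ • (g * σ⁻¹.toLinearMap) :=
  inv_mul_eq_smul_of_twist hr σ.toLinearMap_mul_toLinearMap_inv
    σ.toLinearMap_inv_mul_toLinearMap hσg

theorem pow_apply_eq_smul {x : A} (h : σ x = r • x) (j : ℕ) : (σ ^ j) x = r ^ j • x := by
  induction j with
  | zero => simp
  | succ j ih => rw [pow_succ, mul_apply, h, map_smul, ih, smul_smul, pow_succ, mul_comm]

theorem inv_apply_eq_smul {x : A} (hr : r ≠ 0) (h : σ x = r • x) : σ⁻¹ x = r⁻¹ • x := by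
  rw [← inv_smul_smul₀ hr (σ⁻¹ x), ← map_smul, ← h, ← mul_apply, inv_mul_cancel, one_apply]

end AlgEquiv

section Extension

variable {k A : Type*} [Field k] [CommRing A] [Algebra k A] {n : ℕ} {q : k}
  {σ : A ≃ₐ[k] A} {e f : A →ₗ[k] A}

theorem isDUqExtension_of_sqrt_tc_eq_zero (hn : n ≠ 0) (hq0 : q ≠ 0) (hq2 : q ^ 2 ≠ 1)
    (hσn : σ ^ n = 1) (hσe : σ.toLinearMap * e = q • (e * σ.toLinearMap))
    (hσf : σ.toLinearMap * f = q⁻¹ • (f * σ.toLinearMap))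
    (hf1 : f 1 = 0) (hfab : ∀ a c : A, f (a * c) = a * f c + f a * (σ * σ)⁻¹ c)
    (hfn : f ^ n = 0)
    (hef : (q - q⁻¹) • (e ∘ₗ f - f ∘ₗ e) = (σ * σ).toLinearMap - (σ * σ)⁻¹.toLinearMap) :
    IsDUqExtension n q (σ * σ) e f σ.toLinearMap (((q - q⁻¹) * q⁻¹) • (f ∘ₗ σ.toLinearMap)) 0
      σ⁻¹.toLinearMap := by
  have hσ'e := AlgEquiv.toLinearMap_inv_mul_eq_smul hq0 hσe
  have hσ'f := AlgEquiv.toLinearMap_inv_mul_eq_smul (inv_ne_zero hq0) hσf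
  rw [inv_inv] at hσ'f
  have hσ' (x : A) : (σ * σ)⁻¹ (σ x) = σ⁻¹ x := by
    rw [mul_inv_rev, AlgEquiv.mul_apply, ← AlgEquiv.mul_apply σ⁻¹ σ, inv_mul_cancel,
      AlgEquiv.one_apply]
  simp only [← Module.End.mul_eq_comp, mul_inv_rev, AlgEquiv.toLinearMap_mul] at hef
  unfold IsDUqExtension
  refine ⟨map_one σ, map_one σ⁻¹, by simp [hf1], rfl, ?_, ?_, ?_, ?_, ?_, ?_, ?_, ?_, ?_,
    ?_, ?_, ?_, ?_, ?_, ?_, ?_, ?_, ?_, ?_, ?_, ?_, ?_, ?_, ?_, ?_, ?_⟩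
  · intro v w; simp
  · intro v w
    rw [mul_comm v w]
    simp only [LinearMap.smul_apply, LinearMap.comp_apply, AlgEquiv.toLinearMap_apply,
      map_mul, hfab, hσ', smul_add, smul_mul_assoc, mul_smul_comm]
    ac_rfl
  · intro v w; simp
  · intro v w; simp
  · rw [← AlgEquiv.pow_toLinearMap, hσn, AlgEquiv.one_toLinearMap]
  · rw [← AlgEquiv.pow_toLinearMap, inv_pow, hσn, inv_one, AlgEquiv.one_toLinearMap]
  · rw [smul_pow, ← Module.End.mul_eq_comp, mul_pow_eq_zero_of_twist hσf hfn, smul_zero]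
  · exact zero_pow hn
  all_goals
    simp only [← Module.End.mul_eq_comp, mul_inv_rev, AlgEquiv.toLinearMap_mul,
      ← Module.End.one_eq_id, mul_assoc, hσe, hσf, hσ'e, hσ'f,
      σ.toLinearMap_mul_toLinearMap_inv, σ.toLinearMap_inv_mul_toLinearMap,
      σ.toLinearMap_mul_inv_cancel_left, σ.toLinearMap_inv_mul_cancel_left,
      mul_mul_eq_add_smul_of_smul_commutator (sub_inv_ne_zero_of_sq_ne_one hq0 hq2) hef,
      mul_mul_eq_smul_of_twist hσf, mul_mul_eq_smul_of_twist hσ'f, mul_one, mul_zero,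
      zero_mul, smul_zero, smul_mul_assoc, mul_smul_comm, smul_smul, mul_sub, sub_mul,
      smul_add, smul_sub, zero_add, add_zero, sub_zero, zero_sub, neg_add_cancel]
  all_goals match_scalars <;> field_simp [sub_ne_zero.mpr hq2] <;> ring

theorem isDUqExtension_of_sqrt_tb_eq_zero (hn : n ≠ 0) (hq0 : q ≠ 0) (hq2 : q ^ 2 ≠ 1)
    (hσn : σ ^ n = 1) (hσe : σ.toLinearMap * e = q • (e * σ.toLinearMap))
    (hσf : σ.toLinearMap * f = q⁻¹ • (f * σ.toLinearMap))
    (he1 : e 1 = 0) (heab : ∀ a c : A, e (a * c) = (σ * σ) a * e c + e a * c)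
    (hen : e ^ n = 0)
    (hef : (q - q⁻¹) • (e ∘ₗ f - f ∘ₗ e) = (σ * σ).toLinearMap - (σ * σ)⁻¹.toLinearMap) :
    IsDUqExtension n q (σ * σ) e f σ⁻¹.toLinearMap 0 ((q⁻¹ - q) • (e ∘ₗ σ⁻¹.toLinearMap))
      σ.toLinearMap := by
  have hσ'e := AlgEquiv.toLinearMap_inv_mul_eq_smul hq0 hσe
  have hσ'f := AlgEquiv.toLinearMap_inv_mul_eq_smul (inv_ne_zero hq0) hσf
  rw [inv_inv] at hσ'f
  have hσ (x : A) : (σ * σ) (σ⁻¹ x) = σ x := by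
    rw [AlgEquiv.mul_apply, ← AlgEquiv.mul_apply σ σ⁻¹, mul_inv_cancel, AlgEquiv.one_apply]
  simp only [← Module.End.mul_eq_comp, mul_inv_rev, AlgEquiv.toLinearMap_mul] at hef
  unfold IsDUqExtension
  refine ⟨map_one σ⁻¹, map_one σ, rfl, by simp [he1], ?_, ?_, ?_, ?_, ?_, ?_, ?_, ?_, ?_,
    ?_, ?_, ?_, ?_, ?_, ?_, ?_, ?_, ?_, ?_, ?_, ?_, ?_, ?_, ?_, ?_, ?_⟩
  · intro v w; simp
  · intro v w; simp
  · intro v w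
    rw [mul_comm v w]
    simp only [LinearMap.smul_apply, LinearMap.comp_apply, AlgEquiv.toLinearMap_apply,
      map_mul, heab, hσ, smul_add, smul_mul_assoc, mul_smul_comm]
    ac_rfl
  · intro v w; simp
  · rw [← AlgEquiv.pow_toLinearMap, inv_pow, hσn, inv_one, AlgEquiv.one_toLinearMap]
  · rw [← AlgEquiv.pow_toLinearMap, hσn, AlgEquiv.one_toLinearMap]
  · exact zero_pow hn
  · rw [smul_pow, ← Module.End.mul_eq_comp, mul_pow_eq_zero_of_twist hσ'e hen, smul_zero]
  all_goals
    simp only [← Module.End.mul_eq_comp, mul_inv_rev, AlgEquiv.toLinearMap_mul,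
      ← Module.End.one_eq_id, mul_assoc, hσe, hσf, hσ'e, hσ'f,
      σ.toLinearMap_mul_toLinearMap_inv, σ.toLinearMap_inv_mul_toLinearMap,
      σ.toLinearMap_inv_mul_cancel_left,
      mul_mul_eq_add_smul_of_smul_commutator (sub_inv_ne_zero_of_sq_ne_one hq0 hq2) hef,
      mul_mul_eq_smul_of_twist hσe, mul_mul_eq_smul_of_twist hσ'e, mul_one, mul_zero,
      zero_mul, smul_zero, smul_mul_assoc, mul_smul_comm, smul_smul, mul_sub, sub_mul,
      smul_add, smul_sub, zero_add, add_zero, sub_zero]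
  all_goals match_scalars <;> field_simp [sub_ne_zero.mpr hq2] <;> ring

end Extension

theorem stmt_17_general (k : Type*) [Field k]
    (n : ℕ) (hn : 3 ≤ n) (hodd : Odd n)
    (q : k) (hq : IsPrimitiveRoot q n)
    (A : Type*) [CommRing A] [Algebra k A]
    (u : A)
    (κ : A ≃ₐ[k] A) (e f : A →ₗ[k] A)
    (hκn : κ ^ n = 1)
    (he1 : e 1 = 0) (hf1 : f 1 = 0)
    (heab : ∀ a c : A, e (a * c) = κ a * e c + e a * c)
    (hfab : ∀ a c : A, f (a * c) = a * f c + f a * κ⁻¹ c)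
    (hen : e ^ n = 0) (hfn : f ^ n = 0)
    (hκe : κ.toLinearMap ∘ₗ e = q ^ 2 • (e ∘ₗ κ.toLinearMap))
    (hκf : κ.toLinearMap ∘ₗ f = (q⁻¹) ^ 2 • (f ∘ₗ κ.toLinearMap))
    (hef : (q - q⁻¹) • (e ∘ₗ f - f ∘ₗ e) =
      κ.toLinearMap - (κ⁻¹ : A ≃ₐ[k] A).toLinearMap)
    (γ δ : k) (hγ : γ ≠ 0) (hγδ : γ * δ = -q)
    (hκu : κ u = q ^ 2 • u) (hfu : f u = γ • (1 : A)) (heu : e u = δ • u ^ 2)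
    :
    (∃ Ta Tb Tc Td : A →ₗ[k] A,
      IsDUqExtension n q κ e f Ta Tb Tc Td ∧
      Ta u = q • u ∧ Tb u = (γ * (q - q⁻¹)) • (1 : A) ∧
      Tc u = 0 ∧ Td u = q⁻¹ • u) ∧
    (∃ Ta Tb Tc Td : A →ₗ[k] A,
      IsDUqExtension n q κ e f Ta Tb Tc Td ∧
      Ta u = q⁻¹ • u ∧ Tb u = 0 ∧
      Tc u = (γ⁻¹ * (q - q⁻¹)) • u ^ 2 ∧ Td u = q • u) := by
  have hq0 : q ≠ 0 := hq.ne_zero (by omega)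
  have hq2 : q ^ 2 ≠ 1 := hq.pow_ne_one_of_pos_of_lt two_ne_zero (by omega)
  obtain ⟨m, rfl⟩ := hodd
  have hqm : q ^ (2 * m + 1) = 1 := hq.pow_eq_one
  have hqm' : q⁻¹ ^ (2 * m + 1) = 1 := by rw [inv_pow, hqm, inv_one]
  obtain ⟨σ, rfl, hσn, hσe, hσf, hσu⟩ : ∃ σ : A ≃ₐ[k] A, σ * σ = κ ∧ σ ^ (2 * m + 1) = 1 ∧
      σ.toLinearMap * e = q • (e * σ.toLinearMap) ∧
      σ.toLinearMap * f = q⁻¹ • (f * σ.toLinearMap) ∧ σ u = q • u := by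
    refine ⟨κ ^ (m + 1), pow_succ_mul_pow_succ_of_pow_eq_one hκn, ?_, ?_, ?_, ?_⟩
    · rw [← pow_mul, mul_comm, pow_mul, hκn, one_pow]
    · rw [AlgEquiv.pow_toLinearMap, pow_mul_eq_smul_of_twist hκe, sq_pow_succ_of_pow_eq_one hqm]
    · rw [AlgEquiv.pow_toLinearMap, pow_mul_eq_smul_of_twist hκf,
        sq_pow_succ_of_pow_eq_one hqm']
    · rw [AlgEquiv.pow_apply_eq_smul hκu, sq_pow_succ_of_pow_eq_one hqm]
  have hσ'u := AlgEquiv.inv_apply_eq_smul hq0 hσu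
  have hm : 2 * m + 1 ≠ 0 := by omega
  refine ⟨⟨_, _, _, _, isDUqExtension_of_sqrt_tc_eq_zero hm hq0 hq2 hσn hσe hσf hf1 hfab hfn hef,
    hσu, ?_, rfl, hσ'u⟩, ⟨_, _, _, _,
    isDUqExtension_of_sqrt_tb_eq_zero hm hq0 hq2 hσn hσe hσf he1 heab hen hef, hσ'u, rfl, ?_,
    hσu⟩⟩
  · rw [LinearMap.smul_apply, LinearMap.comp_apply, AlgEquiv.toLinearMap_apply, hσu, map_smul,
      hfu, smul_smul, smul_smul]
    congr 1
    field_simp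
  · rw [LinearMap.smul_apply, LinearMap.comp_apply, AlgEquiv.toLinearMap_apply, hσ'u, map_smul,
      heu, smul_smul, smul_smul]
    congr 1
    field_simp
    linear_combination (1 - q ^ 2) * hγδ

/-- Theorem 5.7 (existence): each of the two prescriptions (i) and (ii) extends the
`u_q(sl₂)`-module-algebra structure on `A = k[u]/(uⁿ - 1)` to a
`D(u_q(sl₂))`-module-algebra structure. -/
theorem stmt_17 (k : Type*) [Field k] [IsAlgClosed k] [CharZero k]
    (n : ℕ) (hn : 3 ≤ n) (hodd : Odd n)
    (q : k) (hq : IsPrimitiveRoot q n)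
    (A : Type*) [CommRing A] [Algebra k A]
    (u : A) (b : Module.Basis (Fin n) k A) (hb : ∀ i : Fin n, b i = u ^ (i : ℕ))
    (hu : u ^ n = 1)
    (κ : A ≃ₐ[k] A) (e f : A →ₗ[k] A)
    (hκn : κ ^ n = 1)
    (he1 : e 1 = 0) (hf1 : f 1 = 0)
    (heab : ∀ a c : A, e (a * c) = κ a * e c + e a * c)
    (hfab : ∀ a c : A, f (a * c) = a * f c + f a * κ⁻¹ c)
    (hen : e ^ n = 0) (hfn : f ^ n = 0)
    (hκe : κ.toLinearMap ∘ₗ e = q ^ 2 • (e ∘ₗ κ.toLinearMap))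
    (hκf : κ.toLinearMap ∘ₗ f = (q⁻¹) ^ 2 • (f ∘ₗ κ.toLinearMap))
    (hef : (q - q⁻¹) • (e ∘ₗ f - f ∘ₗ e) =
      κ.toLinearMap - (κ⁻¹ : A ≃ₐ[k] A).toLinearMap)
    (γ δ : k) (hγ : γ ≠ 0) (hδ : δ ≠ 0) (hγδ : γ * δ = -q)
    (hκu : κ u = q ^ 2 • u) (hfu : f u = γ • (1 : A)) (heu : e u = δ • u ^ 2)
    :
    (∃ Ta Tb Tc Td : A →ₗ[k] A,
      IsDUqExtension n q κ e f Ta Tb Tc Td ∧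
      Ta u = q • u ∧ Tb u = (γ * (q - q⁻¹)) • (1 : A) ∧
      Tc u = 0 ∧ Td u = q⁻¹ • u) ∧
    (∃ Ta Tb Tc Td : A →ₗ[k] A,
      IsDUqExtension n q κ e f Ta Tb Tc Td ∧
      Ta u = q⁻¹ • u ∧ Tb u = 0 ∧
      Tc u = (γ⁻¹ * (q - q⁻¹)) • u ^ 2 ∧ Td u = q • u) :=
  stmt_17_general k n hn hodd q hq A u κ e f hκn he1 hf1 heab hfab hen hfn hκe hκf hef γ δ hγ hγδ
    hκu hfu heu
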